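/- arXiv:2512.04985 — 2 statements merged into one kernel-verified Lean document; each statement's English description precedes it below -/
import Mathlib

section
/- Let p₀ be a probability density on ℝ^d, let r : ℝ^d → [0,∞) be measurable with ∫ r(x) p₀(x) dx < ∞, and let R > 0 satisfy ∫_{‖x‖₂ < R} p₀(x) dx > 1/2. Then for every t ∈ (0,1) and every y ∈ ℝ^d, the conditional reward obeys the upper bound ρ_t(y) ≤ 2·(∫ r(x) p₀(x) dx)·exp((‖y‖₂ + √t·R)²/(2(1−t))). In particular, ρ_t(y) is finite for every y. -/
/-!
The kernel `x ↦ G_t(y,x)` is at most its normalising constant `C = (2π(1−t))^{−d/2}` everywhere and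
at least `C·exp(−(‖y‖+√t·R)²/(2(1−t)))` on the ball of radius `R`, by the triangle inequality.
Hence the numerator `∫ r p₀ G_t(y,·)` of `ρ_t(y)` is at most `C ∫ r p₀`, while the
denominator `q_t(y)` exceeds `C·exp(−(‖y‖+√t·R)²/(2(1−t)))/2` because the ball carries more
than half of the mass of `p₀`; the constant `C` cancels in the quotient.
-/

open MeasureTheory Real

/-- The Gaussian kernel `G_t(y,x) = (2π(1−t))^{−d/2} exp(−‖y−√t·x‖²/(2(1−t)))`. -/
noncomputable def gaussKernel (d : ℕ) (t : ℝ) (y x : EuclideanSpace ℝ (Fin d)) : ℝ :=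
  (2 * π * (1 - t)) ^ (-(d : ℝ) / 2) *
    Real.exp (-‖y - Real.sqrt t • x‖ ^ 2 / (2 * (1 - t)))

/-- The smoothed density `q_t(y) = ∫ p₀(x) G_t(y,x) dx`. -/
noncomputable def smoothed (d : ℕ) (p₀ : EuclideanSpace ℝ (Fin d) → ℝ) (t : ℝ)
    (y : EuclideanSpace ℝ (Fin d)) : ℝ :=
  ∫ x, p₀ x * gaussKernel d t y x

/-- The posterior density `π_t(x|y) = p₀(x) G_t(y,x)/q_t(y)`. -/
noncomputable def post (d : ℕ) (p₀ : EuclideanSpace ℝ (Fin d) → ℝ) (t : ℝ)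
    (x y : EuclideanSpace ℝ (Fin d)) : ℝ :=
  p₀ x * gaussKernel d t y x / smoothed d p₀ t y

/-- The conditional reward `ρ_t(y) = ∫ r(x) π_t(x|y) dx`. -/
noncomputable def condReward (d : ℕ) (p₀ r : EuclideanSpace ℝ (Fin d) → ℝ) (t : ℝ)
    (y : EuclideanSpace ℝ (Fin d)) : ℝ :=
  ∫ x, r x * post d p₀ t x y

/-- The reward-reweighted density `p₀^r(x) = r(x)p₀(x)/∫ r p₀`. -/
noncomputable def reweighted (d : ℕ) (p₀ r : EuclideanSpace ℝ (Fin d) → ℝ)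
    (x : EuclideanSpace ℝ (Fin d)) : ℝ :=
  r x * p₀ x / ∫ x', r x' * p₀ x'

/-- A probability density on `ℝ^d`: measurable, nonnegative, integrating to one. -/
def IsDensity {d : ℕ} (p : EuclideanSpace ℝ (Fin d) → ℝ) : Prop :=
  Measurable p ∧ (∀ x, 0 ≤ p x) ∧ ∫ x, p x = 1

section WeightedIntegral

variable {α : Type*} [MeasurableSpace α] {μ : Measure α} {f g : α → ℝ}

theorem integral_mul_le_const_mul_integral {C : ℝ} (hf : Integrable f μ) (hf0 : ∀ x, 0 ≤ f x)
    (hg0 : ∀ x, 0 ≤ g x) (hgC : ∀ x, g x ≤ C) :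
    ∫ x, f x * g x ∂μ ≤ C * ∫ x, f x ∂μ := by
  rw [← integral_const_mul]
  refine integral_mono_of_nonneg (ae_of_all _ fun x => mul_nonneg (hf0 x) (hg0 x))
    (hf.const_mul C) (ae_of_all _ fun x => ?_)
  simpa only [mul_comm C] using mul_le_mul_of_nonneg_left (hgC x) (hf0 x)

theorem const_mul_setIntegral_le_integral_mul {S : Set α} {c : ℝ} (hS : MeasurableSet S)
    (hf : Integrable f μ) (hfg : Integrable (fun x => f x * g x) μ) (hf0 : ∀ x, 0 ≤ f x)
    (hg0 : ∀ x, 0 ≤ g x) (hcg : ∀ x ∈ S, c ≤ g x) :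
    c * ∫ x in S, f x ∂μ ≤ ∫ x, f x * g x ∂μ :=
  calc c * ∫ x in S, f x ∂μ = ∫ x in S, c * f x ∂μ := (integral_const_mul _ _).symm
    _ ≤ ∫ x in S, f x * g x ∂μ :=
      setIntegral_mono_on (hf.const_mul c).integrableOn hfg.integrableOn hS fun x hx => by
        rw [mul_comm c]
        exact mul_le_mul_of_nonneg_left (hcg x hx) (hf0 x)
    _ ≤ ∫ x, f x * g x ∂μ :=
      setIntegral_le_integral hfg (ae_of_all _ fun x => mul_nonneg (hf0 x) (hg0 x))

end WeightedIntegral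

section GaussKernel

variable {d : ℕ} {t : ℝ}

theorem continuous_gaussKernel (y : EuclideanSpace ℝ (Fin d)) :
    Continuous (gaussKernel d t y) := by
  unfold gaussKernel
  fun_prop

theorem gaussKernel_nonneg (ht : t ≤ 1) (y x : EuclideanSpace ℝ (Fin d)) :
    0 ≤ gaussKernel d t y x :=
  mul_nonneg (rpow_nonneg (by nlinarith [pi_pos]) _) (exp_nonneg _)

theorem gaussKernel_le (ht : t ≤ 1) (y x : EuclideanSpace ℝ (Fin d)) :
    gaussKernel d t y x ≤ (2 * π * (1 - t)) ^ (-(d : ℝ) / 2) := by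
  refine mul_le_of_le_one_right (rpow_nonneg (by nlinarith [pi_pos]) _) (exp_le_one_iff.2 ?_)
  exact div_nonpos_of_nonpos_of_nonneg (neg_nonpos.2 (sq_nonneg _)) (by linarith)

theorem le_gaussKernel (ht : t ≤ 1) {R : ℝ} (y : EuclideanSpace ℝ (Fin d))
    {x : EuclideanSpace ℝ (Fin d)} (hx : ‖x‖ ≤ R) :
    (2 * π * (1 - t)) ^ (-(d : ℝ) / 2) * exp (-((‖y‖ + √t * R) ^ 2 / (2 * (1 - t)))) ≤
      gaussKernel d t y x := by
  have hdist : ‖y - √t • x‖ ≤ ‖y‖ + √t * R :=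
    calc ‖y - √t • x‖ ≤ ‖y‖ + √t * ‖x‖ := by
          simpa [norm_smul, abs_of_nonneg (sqrt_nonneg t)] using norm_sub_le y (√t • x)
      _ ≤ ‖y‖ + √t * R := by gcongr
  refine mul_le_mul_of_nonneg_left ?_ (rpow_nonneg (by nlinarith [pi_pos]) _)
  rw [neg_div]
  gcongr

theorem MeasureTheory.Integrable.mul_gaussKernel (ht : t ≤ 1) {f : EuclideanSpace ℝ (Fin d) → ℝ}
    (hf : Integrable f) (y : EuclideanSpace ℝ (Fin d)) :
    Integrable (fun x => f x * gaussKernel d t y x) :=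
  hf.mul_bdd (continuous_gaussKernel y).aestronglyMeasurable <| ae_of_all _ fun x => by
    rw [norm_of_nonneg (gaussKernel_nonneg ht y x)]
    exact gaussKernel_le ht y x

end GaussKernel

theorem condReward_eq_div {d : ℕ} (p₀ r : EuclideanSpace ℝ (Fin d) → ℝ) (t : ℝ)
    (y : EuclideanSpace ℝ (Fin d)) :
    condReward d p₀ r t y =
      (∫ x, r x * p₀ x * gaussKernel d t y x) / smoothed d p₀ t y := by
  simp only [condReward, post, ← integral_div, mul_div_assoc, mul_assoc]

theorem IsDensity.integrable {d : ℕ} {p : EuclideanSpace ℝ (Fin d) → ℝ} (hp : IsDensity p) :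
    Integrable p :=
  Integrable.of_integral_ne_zero (by rw [hp.2.2]; exact one_ne_zero)

theorem stmt_7_general {d : ℕ} (p₀ r : EuclideanSpace ℝ (Fin d) → ℝ)
    (hp : IsDensity p₀) (hr0 : ∀ x, 0 ≤ r x)
    (hri : Integrable (fun x => r x * p₀ x))
    (R : ℝ)
    (hmass : 1 / 2 < ∫ x in {x : EuclideanSpace ℝ (Fin d) | ‖x‖ < R}, p₀ x)
    (t : ℝ) (ht : t ∈ Set.Ioo (0 : ℝ) 1) (y : EuclideanSpace ℝ (Fin d)) :
    condReward d p₀ r t y ≤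
      2 * (∫ x, r x * p₀ x) *
        Real.exp ((‖y‖ + Real.sqrt t * R) ^ 2 / (2 * (1 - t))) := by
  have ht1 : t ≤ 1 := ht.2.le
  set C := (2 * π * (1 - t)) ^ (-(d : ℝ) / 2)
  set M := (‖y‖ + √t * R) ^ 2 / (2 * (1 - t))
  have hC : 0 < C := rpow_pos_of_pos (by nlinarith [pi_pos, ht.2]) _
  have hsmoothed : C * exp (-M) / 2 < smoothed d p₀ t y :=
    calc C * exp (-M) / 2 < C * exp (-M) * ∫ x in {x | ‖x‖ < R}, p₀ x := by
          have : 0 < C * exp (-M) := by positivity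
          nlinarith
      _ ≤ smoothed d p₀ t y :=
        const_mul_setIntegral_le_integral_mul (measurableSet_lt (by fun_prop) (by fun_prop))
          hp.integrable (hp.integrable.mul_gaussKernel ht1 y) hp.2.1 (gaussKernel_nonneg ht1 y)
          fun x hx => le_gaussKernel ht1 y hx.le
  have hnumerator : ∫ x, r x * p₀ x * gaussKernel d t y x ≤ C * ∫ x, r x * p₀ x :=
    integral_mul_le_const_mul_integral hri (fun x => mul_nonneg (hr0 x) (hp.2.1 x))
      (gaussKernel_nonneg ht1 y) (gaussKernel_le ht1 y)
  have hreward : 0 ≤ ∫ x, r x * p₀ x := integral_nonneg fun x => mul_nonneg (hr0 x) (hp.2.1 x)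
  rw [condReward_eq_div]
  calc _ ≤ C * (∫ x, r x * p₀ x) / (C * exp (-M) / 2) :=
        div_le_div₀ (by positivity) hnumerator (by positivity) hsmoothed.le
    _ = 2 * (∫ x, r x * p₀ x) * exp M := by
        rw [exp_neg]
        field_simp

/-- Upper bound on the conditional reward: if `∫_{‖x‖<R} p₀ > 1/2` then
`ρ_t(y) ≤ 2·(∫ r p₀)·exp((‖y‖+√t·R)²/(2(1−t)))`. -/
theorem stmt_7 {d : ℕ} (hd : 1 ≤ d) (p₀ r : EuclideanSpace ℝ (Fin d) → ℝ)
    (hp : IsDensity p₀) (hr : Measurable r) (hr0 : ∀ x, 0 ≤ r x)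
    (hri : Integrable (fun x => r x * p₀ x))
    (R : ℝ) (hR : 0 < R)
    (hmass : 1 / 2 < ∫ x in {x : EuclideanSpace ℝ (Fin d) | ‖x‖ < R}, p₀ x)
    (t : ℝ) (ht : t ∈ Set.Ioo (0 : ℝ) 1) (y : EuclideanSpace ℝ (Fin d)) :
    condReward d p₀ r t y ≤
      2 * (∫ x, r x * p₀ x) *
        Real.exp ((‖y‖ + Real.sqrt t * R) ^ 2 / (2 * (1 - t))) :=
  stmt_7_general p₀ r hp hr0 hri R hmass t ht y
end

section
/- There exists a universal constant C > 0 with the following property. For every integer d ≥ 1, every probability density p₀ on ℝ^d, every measurable r : ℝ^d → [0,∞) with 0 < ∫ r(x) p₀(x) dx < ∞, every R > 0 with ∫_{‖x‖₂ < R} p₀^r(x) dx > 1/2, every t ∈ (0,1), and every y ∈ ℝ^d, the first absolute moment of the reweighted posterior satisfies ∫_{ℝ^d} (‖y − √t·x‖₂/(1−t)) · π_t^r(x|y) dx ≤ C·( (‖y‖₂ + √t·R)/(1−t) + d/√(1−t) ). -/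
open MeasureTheory Real

/-!
Write `s = 1 - t`, `u(x) = ‖y - √t x‖` and `a = ‖y‖ + √t R`, so that the posterior of `p = p₀^r`
is `p(x) e^{-u²/2s} / q` up to a common constant. On the ball `‖x‖ < R` we have `u ≤ a`, and that
ball carries `p`-mass more than `1/2`, so `q ≥ e^{-a²/2s} / 2`. Where `u ≤ 2a` the integrand is at
most `(2a/s)` times the posterior. Where `u > 2a`, Gaussian decay beats the linear factor:
`u e^{-u²/2s} ≤ √s e^{-a²/2s}`, so there the integrand is at most `(2/√s) p(x)`. Integrating
gives the bound `2a/s + 2/√s`.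
-/

theorem mul_exp_neg_sq_div_le_sqrt_mul_exp {s a u : ℝ} (hs : 0 < s) (ha : 0 ≤ a)
    (hau : 2 * a ≤ u) :
    u * exp (-u ^ 2 / (2 * s)) ≤ √s * exp (-a ^ 2 / (2 * s)) := by
  obtain ⟨σ, hσ, rfl⟩ : ∃ σ, 0 < σ ∧ s = σ ^ 2 := ⟨√s, sqrt_pos.mpr hs, (sq_sqrt hs.le).symm⟩
  rw [sqrt_sq hσ.le]
  set x := (u ^ 2 - a ^ 2) / (2 * σ ^ 2) with hx_def
  -- `e^x ≥ 1 + x` and `u ≥ 2a` reduce the claim to `u ≤ σ + 3u²/(8σ)`, which is AM-GM.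
  have hgrowth : u ≤ σ * exp x := by
    have hx : 3 * u ^ 2 / (8 * σ ^ 2) ≤ x := by
      rw [div_le_div_iff₀ (by positivity) (by positivity)]
      nlinarith [mul_le_mul_of_nonneg_right (by nlinarith : 4 * a ^ 2 ≤ u ^ 2) (sq_nonneg σ)]
    have hamgm : u ≤ σ * (3 * u ^ 2 / (8 * σ ^ 2) + 1) := by
      rw [← sub_nonneg]
      have : 0 ≤ ((σ - u / 2) ^ 2 + u ^ 2 / 8) / σ := by positivity
      convert this using 1
      field_simp
      ring
    exact hamgm.trans (mul_le_mul_of_nonneg_left ((add_le_add_left hx 1).trans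
      (add_one_le_exp x)) hσ.le)
  calc u * exp (-u ^ 2 / (2 * σ ^ 2)) = exp (-a ^ 2 / (2 * σ ^ 2)) * (u / exp x) := by
        rw [mul_div_assoc', eq_div_iff (exp_pos x).ne', mul_assoc, ← exp_add, mul_comm _ u, hx_def]
        ring_nf
    _ ≤ exp (-a ^ 2 / (2 * σ ^ 2)) * σ := by
        gcongr
        rwa [div_le_iff₀ (exp_pos _)]
    _ = σ * exp (-a ^ 2 / (2 * σ ^ 2)) := mul_comm _ _

theorem div_mul_gaussian_ratio_le {p u a s c q : ℝ} (hp : 0 ≤ p) (ha : 0 ≤ a)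
    (hs : 0 < s) (hc : 0 < c) (hq : c * exp (-a ^ 2 / (2 * s)) / 2 ≤ q) :
    u / s * (p * (c * exp (-u ^ 2 / (2 * s))) / q) ≤
      2 * a / s * (p * (c * exp (-u ^ 2 / (2 * s))) / q) + 2 / √s * p := by
  have hq_pos : 0 < q := lt_of_lt_of_le (by positivity) hq
  rcases le_or_gt u (2 * a) with hnear | hfar
  · have : u / s * (p * (c * exp (-u ^ 2 / (2 * s))) / q) ≤
        2 * a / s * (p * (c * exp (-u ^ 2 / (2 * s))) / q) := by gcongr
    linarith [show 0 ≤ 2 / √s * p by positivity]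
  · have : u / s * (p * (c * exp (-u ^ 2 / (2 * s))) / q) ≤ 2 / √s * p :=
      calc u / s * (p * (c * exp (-u ^ 2 / (2 * s))) / q)
          = p * c / (s * q) * (u * exp (-u ^ 2 / (2 * s))) := by ring
        _ ≤ p * c / (s * q) * (√s * exp (-a ^ 2 / (2 * s))) :=
          mul_le_mul_of_nonneg_left (mul_exp_neg_sq_div_le_sqrt_mul_exp hs ha hfar.le)
            (by positivity)
        _ = 2 * p * √s / s * (c * exp (-a ^ 2 / (2 * s)) / 2 / q) := by ring
        _ ≤ 2 * p * √s / s * 1 := by gcongr; rwa [div_le_one hq_pos]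
        _ = 2 / √s * p := by rw [mul_one, mul_div_assoc, sqrt_div_self']; ring
    linarith [show 0 ≤ 2 * a / s * (p * (c * exp (-u ^ 2 / (2 * s))) / q) by positivity]

section

variable {X : Type*} [MeasurableSpace X] {μ : Measure X} {p : X → ℝ} {S : Set X}

theorem mul_setIntegral_le_integral_mul {w : X → ℝ} {m : ℝ} (hS : MeasurableSet S)
    (hp : Integrable p μ) (hp_nonneg : ∀ x, 0 ≤ p x) (hw_nonneg : ∀ x, 0 ≤ w x)
    (hpw : Integrable (fun x => p x * w x) μ) (hm : ∀ x ∈ S, m ≤ w x) :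
    m * ∫ x in S, p x ∂μ ≤ ∫ x, p x * w x ∂μ :=
  calc m * ∫ x in S, p x ∂μ = ∫ x in S, p x * m ∂μ := by rw [integral_mul_const, mul_comm]
    _ ≤ ∫ x in S, p x * w x ∂μ :=
      setIntegral_mono_on (hp.mul_const m).integrableOn hpw.integrableOn hS
        fun x hx => mul_le_mul_of_nonneg_left (hm x hx) (hp_nonneg x)
    _ ≤ ∫ x, p x * w x ∂μ :=
      setIntegral_le_integral hpw (ae_of_all _ fun x => mul_nonneg (hp_nonneg x) (hw_nonneg x))

theorem integral_mul_gaussian_posterior_le {u : X → ℝ} {a s c : ℝ} (hp : Integrable p μ)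
    (hp_nonneg : ∀ x, 0 ≤ p x) (hp_one : ∫ x, p x ∂μ = 1) (hu : Measurable u)
    (hu_nonneg : ∀ x, 0 ≤ u x) (hS : MeasurableSet S) (hmass : 1 / 2 < ∫ x in S, p x ∂μ)
    (huS : ∀ x ∈ S, u x ≤ a) (ha : 0 ≤ a) (hs : 0 < s) (hc : 0 < c) :
    ∫ x, u x / s * (p x * (c * exp (-u x ^ 2 / (2 * s))) /
        ∫ x', p x' * (c * exp (-u x' ^ 2 / (2 * s))) ∂μ) ∂μ ≤ 2 * a / s + 2 / √s := by
  set w : X → ℝ := fun x => c * exp (-u x ^ 2 / (2 * s))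
  set q := ∫ x, p x * w x ∂μ
  have hw_meas : Measurable w := by fun_prop
  have hw_nonneg : ∀ x, 0 ≤ w x := fun x => by positivity
  have hpw : Integrable (fun x => p x * w x) μ := by
    refine hp.mul_bdd hw_meas.aestronglyMeasurable (c := c) (ae_of_all _ fun x => ?_)
    rw [Real.norm_of_nonneg (hw_nonneg x)]
    exact mul_le_of_le_one_right hc.le (exp_le_one_iff.mpr (by
      rw [neg_div]; exact neg_nonpos.mpr (by positivity)))
  have hq : c * exp (-a ^ 2 / (2 * s)) / 2 ≤ q := by
    have hwS : ∀ x ∈ S, c * exp (-a ^ 2 / (2 * s)) ≤ w x := fun x hx => by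
      change c * exp _ ≤ c * exp _
      gcongr c * exp (?_ / _)
      exact neg_le_neg (pow_le_pow_left₀ (hu_nonneg x) (huS x hx) 2)
    have := mul_setIntegral_le_integral_mul hS hp hp_nonneg hw_nonneg hpw hwS
    nlinarith [show 0 < c * exp (-a ^ 2 / (2 * s)) by positivity]
  have hq_pos : 0 < q := lt_of_lt_of_le (by positivity) hq
  have hpost : Integrable (fun x => p x * w x / q) μ := hpw.div_const q
  have hbound := fun x => div_mul_gaussian_ratio_le (u := u x) (hp_nonneg x) ha hs hc hq
  have hdom : Integrable (fun x => 2 * a / s * (p x * w x / q) + 2 / √s * p x) μ :=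
    (hpost.const_mul _).add (hp.const_mul _)
  have hint : Integrable (fun x => u x / s * (p x * w x / q)) μ := by
    refine hdom.mono' ((hu.div_const s).aestronglyMeasurable.mul hpost.1)
      (ae_of_all _ fun x => ?_)
    rw [Real.norm_of_nonneg (mul_nonneg (div_nonneg (hu_nonneg x) hs.le)
      (div_nonneg (mul_nonneg (hp_nonneg x) (hw_nonneg x)) hq_pos.le))]
    exact hbound x
  calc ∫ x, u x / s * (p x * w x / q) ∂μ
      ≤ ∫ x, (2 * a / s * (p x * w x / q) + 2 / √s * p x) ∂μ :=
        integral_mono hint hdom hbound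
    _ = 2 * a / s + 2 / √s := by
        rw [integral_add (hpost.const_mul _) (hp.const_mul _), integral_const_mul,
          integral_const_mul, integral_div, div_self hq_pos.ne', hp_one, mul_one, mul_one]

end

section Reweighted

variable {d : ℕ} {p₀ r : EuclideanSpace ℝ (Fin d) → ℝ}

theorem reweighted_nonneg (hp₀ : ∀ x, 0 ≤ p₀ x) (hr : ∀ x, 0 ≤ r x)
    (hZ : 0 ≤ ∫ x, r x * p₀ x) (x : EuclideanSpace ℝ (Fin d)) : 0 ≤ reweighted d p₀ r x :=
  div_nonneg (mul_nonneg (hr x) (hp₀ x)) hZ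

theorem integrable_reweighted (hrp : Integrable fun x => r x * p₀ x) :
    Integrable (reweighted d p₀ r) :=
  hrp.div_const _

theorem integral_reweighted (hZ : ∫ x, r x * p₀ x ≠ 0) : ∫ x, reweighted d p₀ r x = 1 := by
  simp only [reweighted]
  rw [integral_div, div_self hZ]

end Reweighted

theorem norm_sub_smul_le_of_norm_le {E : Type*} [SeminormedAddCommGroup E] [NormedSpace ℝ E]
    {y x : E} {c R : ℝ} (hc : 0 ≤ c) (hx : ‖x‖ ≤ R) : ‖y - c • x‖ ≤ ‖y‖ + c * R :=
  calc ‖y - c • x‖ ≤ ‖y‖ + ‖c • x‖ := norm_sub_le _ _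
    _ = ‖y‖ + c * ‖x‖ := by rw [norm_smul, Real.norm_of_nonneg hc]
    _ ≤ ‖y‖ + c * R := by gcongr

/-- Universal first-moment bound for the reweighted posterior:
`∫ (‖y − √t·x‖/(1−t))·π_t^r(x|y) dx ≤ C·((‖y‖+√t·R)/(1−t) + d/√(1−t))` whenever
`∫_{‖x‖<R} p₀^r > 1/2`. -/
theorem stmt_11 :
    ∃ C : ℝ, 0 < C ∧
      ∀ (d : ℕ), 1 ≤ d →
      ∀ p₀ r : EuclideanSpace ℝ (Fin d) → ℝ,
        IsDensity p₀ → Measurable r → (∀ x, 0 ≤ r x) →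
        (0 < ∫ x, r x * p₀ x) → Integrable (fun x => r x * p₀ x) →
      ∀ R : ℝ, 0 < R →
        (1 / 2 < ∫ x in {x : EuclideanSpace ℝ (Fin d) | ‖x‖ < R}, reweighted d p₀ r x) →
      ∀ t : ℝ, t ∈ Set.Ioo (0 : ℝ) 1 →
      ∀ y : EuclideanSpace ℝ (Fin d),
        (∫ x, (‖y - Real.sqrt t • x‖ / (1 - t)) * post d (reweighted d p₀ r) t x y) ≤
          C * ((‖y‖ + Real.sqrt t * R) / (1 - t) + d / Real.sqrt (1 - t)) := by
  refine ⟨2, two_pos, fun d hd p₀ r hp₀ _ hr hZ hrp R hR hmass t ht y => ?_⟩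
  have hs : 0 < 1 - t := sub_pos.mpr ht.2
  have hd : (1 : ℝ) ≤ d := Nat.one_le_cast.mpr hd
  have hmoment := integral_mul_gaussian_posterior_le (u := fun x => ‖y - √t • x‖)
    (c := (2 * π * (1 - t)) ^ (-(d : ℝ) / 2)) (integrable_reweighted hrp)
    (reweighted_nonneg hp₀.2.1 hr hZ.le) (integral_reweighted hZ.ne')
    (by fun_prop) (fun x => norm_nonneg _)
    (isOpen_lt continuous_norm continuous_const).measurableSet hmass
    (fun x hx => norm_sub_smul_le_of_norm_le (sqrt_nonneg t) (le_of_lt hx)) (by positivity) hs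
    (by positivity)
  -- `post` and `gaussKernel` unfold definitionally to the posterior of `hmoment`.
  refine hmoment.trans ?_
  calc 2 * (‖y‖ + √t * R) / (1 - t) + 2 / √(1 - t)
      ≤ 2 * (‖y‖ + √t * R) / (1 - t) + 2 * (d / √(1 - t)) := by
        rw [mul_div_assoc']; gcongr; linarith
    _ = 2 * ((‖y‖ + √t * R) / (1 - t) + d / √(1 - t)) := by ring
end
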